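/- Let ℓ, k, n ≥ 1 and 1 ≤ b ≤ k. Let (σ_1, A_1), …, (σ_ℓ, A_ℓ) be a proper configuration (σ_i ∈ {0,…,b}, A_i ⊆ {1,…,n}, σ_i + |A_i| ≤ k), and suppose gid_k((σ_i,A_i)_i) = d ≥ 1. Then there exists a minimal contraction (σ'_1, A'_1), …, (σ'_ℓ, A'_ℓ), i.e. σ'_i ≤ σ_i and A'_i ⊆ A_i for all i with Σ_{i=1}^ℓ ((σ_i − σ'_i) + (|A_i| − |A'_i|)) = 1, such that gid_k((σ'_i,A'_i)_i) = d − 1. -/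

import Mathlib

open Finset Matrix

noncomputable section

/-- The intersection `⋂_{j ∈ p} A j`, as a `Finset (Fin n)`. -/
def interSet {ℓ n : ℕ} (A : Fin ℓ → Finset (Fin n)) (p : Finset (Fin ℓ)) : Finset (Fin n) :=
  Finset.univ.filter fun x => ∀ j ∈ p, x ∈ A j

/-- The dimension-`m` null intersection property: for every partition of `{1,…,ℓ}`
(presented as a `Finpartition` of `Finset.univ : Finset (Fin ℓ)`) into nonempty parts
`P_1,…,P_s`, we have `Σ_i |⋂_{j ∈ P_i} A_j| ≤ (s-1)·m`. -/
def NullInter {ℓ n : ℕ} (m : ℕ) (A : Fin ℓ → Finset (Fin n)) : Prop :=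
  ∀ P : Finpartition (Finset.univ : Finset (Fin ℓ)),
    ∑ p ∈ P.parts, (interSet A p).card ≤ (P.parts.card - 1) * m

/-- Span of the columns of `M` indexed by `A`. -/
def colSpan {K : Type*} [Field K] {k n : ℕ} (M : Matrix (Fin k) (Fin n) K)
    (A : Finset (Fin n)) : Submodule K (Fin k → K) :=
  Submodule.span K ((fun j i => M i j) '' (A : Set (Fin n)))

/-- Span of the first `σ` columns of `M`. -/
def colSpanLT {K : Type*} [Field K] {k b : ℕ} (M : Matrix (Fin k) (Fin b) K)
    (σ : ℕ) : Submodule K (Fin k → K) :=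
  Submodule.span K ((fun j i => M i j) '' {j : Fin b | (j : ℕ) < σ})

/-- The minimum of `σ` over the set `p` (for nonempty `p`, this is `min_{j ∈ p} σ j`). -/
def partMin {ℓ : ℕ} (σ : Fin ℓ → ℕ) (p : Finset (Fin ℓ)) : ℕ :=
  sInf (σ '' (p : Set (Fin ℓ)))

/-- The generic intersection dimension `gid_m((σ_i, A_i)_i)`: the maximum over all
partitions of `{1,…,ℓ}` into nonempty parts `P_1,…,P_s` of
`-m(s-1) + Σ_i (min_{j ∈ P_i} σ_j + |⋂_{j ∈ P_i} A_j|)`. -/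
def gid {ℓ n : ℕ} (m : ℕ) (σ : Fin ℓ → ℕ) (A : Fin ℓ → Finset (Fin n)) : ℤ :=
  sSup { v : ℤ | ∃ P : Finpartition (Finset.univ : Finset (Fin ℓ)),
    v = -(m : ℤ) * ((P.parts.card : ℤ) - 1)
      + ∑ p ∈ P.parts, ((partMin σ p : ℤ) + ((interSet A p).card : ℤ)) }

/-!
The set function `gidTerm σ A p = min_{j ∈ p} σ_j + |⋂_{j ∈ p} A_j|` is supermodular on
intersecting pairs. So if `J` and `Q` are optimal partitions and `q` is a part of `Q`, merging the
parts of `J` that meet `q` into one part and splitting `q` along `J` gives two partitions whose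
scores add up to at least `2 d`; both are optimal. For `J` optimal with the fewest parts this
forces every optimal partition to refine `J`.

As `d ≥ 1`, some part `q` of `J` has `gidTerm σ A q ≥ 1`: either some `x` lies in `A_j` for all
`j ∈ q`, or `σ_j ≥ 1` on `q`. Removing `x` from one `A_i` with `i ∈ q`, respectively lowering `σ_i`
by one at a minimiser `i ∈ q`, changes only the parts containing `i`, each by at most one, and the
part containing `i` of an optimal partition lies in `q`, where the drop is exactly one. Hence the
maximal score drops to `d - 1`.
-/

namespace Finpartition

variable {α : Type*} [DistribLattice α] [OrderBot α] [DecidableEq α] {a b : α}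

def replace (P : Finpartition a) {T : Finset α} (hT : T ⊆ P.parts) (R : Finpartition b)
    (hb : T.sup id = b) : Finpartition a where
  parts := P.parts \ T ∪ R.parts
  supIndep := by
    rw [supIndep_iff_pairwiseDisjoint, coe_union]
    refine (P.disjoint.subset (by simp)).union R.disjoint fun x hx y hy _ ↦ ?_
    rw [mem_coe, mem_sdiff] at hx
    exact (P.supIndep hT hx.1 hx.2).mono_right (hb ▸ R.le hy)
  sup_parts := by
    rw [sup_union, R.sup_parts, ← hb, ← sup_union, sdiff_union_of_subset hT, P.sup_parts]
  bot_notMem := by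
    simp only [mem_union, mem_sdiff, not_or, not_and]
    exact ⟨fun h ↦ absurd h P.bot_notMem, R.bot_notMem⟩

variable (P : Finpartition a) {T : Finset α} (R : Finpartition b)

lemma disjoint_sdiff_parts_of_sup_eq (hT : T ⊆ P.parts) (hb : T.sup id = b) :
    Disjoint (P.parts \ T) R.parts := by
  refine disjoint_left.2 fun x hx hxR ↦ R.ne_bot hxR ?_
  rw [mem_sdiff] at hx
  exact (P.supIndep hT hx.1 hx.2).eq_bot_of_le (hb ▸ R.le hxR)

lemma card_replace (hT : T ⊆ P.parts) (hb : T.sup id = b) :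
    #(P.replace hT R hb).parts + #T = #P.parts + #R.parts := by
  rw [replace, card_union_of_disjoint (P.disjoint_sdiff_parts_of_sup_eq R hT hb), add_right_comm,
    card_sdiff_add_card_eq_card hT]

lemma sum_replace (hT : T ⊆ P.parts) (hb : T.sup id = b) {M : Type*} [AddCommMonoid M]
    (f : α → M) :
    ∑ p ∈ (P.replace hT R hb).parts, f p + ∑ p ∈ T, f p
      = ∑ p ∈ P.parts, f p + ∑ p ∈ R.parts, f p := by
  rw [replace, sum_union (P.disjoint_sdiff_parts_of_sup_eq R hT hb), add_right_comm, sum_sdiff hT]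

lemma sum_restrict_eq_sum_filter (hb : b ≤ a) {M : Type*} [AddCommMonoid M] (f : α → M) :
    ∑ p ∈ (P.restrict hb).parts, f p = ∑ q ∈ P.parts with q ⊓ b ≠ ⊥, f (q ⊓ b) := by
  classical
  rw [sum_filter, ← P.sum_restrict hb (fun p ↦ if p ≠ ⊥ then f p else 0) (by simp)]
  exact sum_congr rfl fun p hp ↦ (if_pos ((P.restrict hb).ne_bot hp)).symm

lemma card_restrict (hb : b ≤ a) : #(P.restrict hb).parts = #{q ∈ P.parts | q ⊓ b ≠ ⊥} := by
  simp only [card_eq_sum_ones, P.sum_restrict_eq_sum_filter hb]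

end Finpartition

section Uncrossing

variable {ι : Type*} {s : Finset ι}

structure DropsAt (f g : Finset ι → ℤ) (i : ι) (q : Finset ι) : Prop where
  eq_of_notMem : ∀ p, i ∉ p → g p = f p
  le_of_mem : ∀ p, i ∈ p → g p ≤ f p
  le_add_one_of_mem : ∀ p, i ∈ p → f p ≤ g p + 1
  lt_of_subset : ∀ p, i ∈ p → p ⊆ q → g p < f p

variable [DecidableEq ι]

def IntersectingSupermodular (f : Finset ι → ℤ) : Prop :=
  ∀ ⦃p q : Finset ι⦄, (p ∩ q).Nonempty → f p + f q ≤ f (p ∪ q) + f (p ∩ q)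

lemma IntersectingSupermodular.add_sum_le {f : Finset ι → ℤ} (hf : IntersectingSupermodular f)
    (q : Finset ι) {T : Finset (Finset ι)} (hT : (T : Set (Finset ι)).PairwiseDisjoint id)
    (hTq : ∀ p ∈ T, (p ∩ q).Nonempty) :
    f q + ∑ p ∈ T, f p ≤ f (q ∪ T.sup id) + ∑ p ∈ T, f (p ∩ q) := by
  induction T using Finset.induction_on with
  | empty => simp
  | @insert p T hpT ih =>
    rw [coe_insert] at hT
    have hdisj : Disjoint p (T.sup id) := Finset.disjoint_sup_right.2 fun r hr ↦
      hT (by simp) (by simp [hr]) (ne_of_mem_of_not_mem hr hpT).symm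
    have hmeet : (q ∪ T.sup id) ∩ p = p ∩ q := by
      rw [union_inter_distrib_right, disjoint_iff_inter_eq_empty.1 hdisj.symm, union_empty,
        inter_comm]
    have hstep := hf (p := q ∪ T.sup id) (q := p) (hmeet ▸ hTq p (mem_insert_self p T))
    have ih := ih (hT.subset (Set.subset_insert p T)) fun r hr ↦ hTq r (mem_insert_of_mem hr)
    rw [hmeet, union_assoc, union_comm (T.sup id)] at hstep
    rw [sum_insert hpT, sum_insert hpT, sup_insert, id, sup_eq_union]
    linarith

namespace Finpartition

def score (m : ℤ) (f : Finset ι → ℤ) (P : Finpartition s) : ℤ :=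
  -m * (#P.parts - 1) + ∑ p ∈ P.parts, f p

variable {m : ℤ} {f : Finset ι → ℤ} {D : ℤ}

def meetingParts (P : Finpartition s) (q : Finset ι) : Finset (Finset ι) :=
  {p ∈ P.parts | (p ∩ q).Nonempty}

lemma subset_sup_meetingParts (P : Finpartition s) {q : Finset ι} (hq : q ⊆ s) :
    q ⊆ (P.meetingParts q).sup id := by
  intro x hx
  obtain ⟨p, hp, hxp⟩ := P.exists_mem (hq hx)
  exact le_sup (f := id) (mem_filter.2 ⟨hp, x, mem_inter.2 ⟨hxp, hx⟩⟩) hxp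

lemma exists_uncrossing (hf : IntersectingSupermodular f) (m : ℤ)
    (J Q : Finpartition s) {q : Finset ι} (hq : q ∈ Q.parts) :
    ∃ P R : Finpartition s, #P.parts + #(J.meetingParts q) = #J.parts + 1 ∧
      J.score m f + Q.score m f ≤ P.score m f + R.score m f := by
  set T := J.meetingParts q
  have hTJ : T ⊆ J.parts := filter_subset _ _
  have hqT : q ⊆ T.sup id := J.subset_sup_meetingParts (Q.subset hq)
  have hT : T.sup id ≠ ⊥ := ((Q.nonempty_of_mem_parts hq).mono hqT).ne_empty
  have hrestrict : {p ∈ J.parts | p ⊓ q ≠ ⊥} = T :=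
    filter_congr fun p _ ↦ by simp [nonempty_iff_ne_empty]
  set P := J.replace hTJ (indiscrete hT) rfl
  set R := Q.replace (singleton_subset_iff.2 hq) (J.restrict (Q.le hq)) sup_singleton
  have hcardP : #P.parts + #T = #J.parts + 1 := by
    simpa using J.card_replace (indiscrete hT) hTJ rfl
  have hcardR : #R.parts + 1 = #Q.parts + #T := by
    have h := Q.card_replace (J.restrict (Q.le hq)) (singleton_subset_iff.2 hq) sup_singleton
    rwa [card_restrict, hrestrict, card_singleton] at h
  have hsumP : ∑ p ∈ P.parts, f p + ∑ p ∈ T, f p = ∑ p ∈ J.parts, f p + f (T.sup id) := by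
    simpa using J.sum_replace (indiscrete hT) hTJ rfl f
  have hsumR : ∑ p ∈ R.parts, f p + f q = ∑ p ∈ Q.parts, f p + ∑ p ∈ T, f (p ∩ q) := by
    have h := Q.sum_replace (J.restrict (Q.le hq)) (singleton_subset_iff.2 hq) sup_singleton f
    rwa [sum_restrict_eq_sum_filter, hrestrict, sum_singleton] at h
  have hchain := hf.add_sum_le q (J.disjoint.subset hTJ) fun p hp ↦ (mem_filter.1 hp).2
  rw [union_eq_right.2 hqT] at hchain
  refine ⟨P, R, hcardP, ?_⟩
  have hcardP' : (#P.parts : ℤ) + #T = #J.parts + 1 := by exact_mod_cast hcardP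
  have hcardR' : (#R.parts : ℤ) + 1 = #Q.parts + #T := by exact_mod_cast hcardR
  simp only [score]
  linear_combination hchain - hsumP - hsumR + m * hcardP' + m * hcardR'

lemma exists_score_eq_card_lt (hf : IntersectingSupermodular f)
    (hD : IsGreatest (Set.range (score (s := s) m f)) D) {J Q : Finpartition s}
    (hJ : J.score m f = D) (hQ : Q.score m f = D) {q : Finset ι} (hq : q ∈ Q.parts)
    (hT : 1 < #(J.meetingParts q)) :
    ∃ P : Finpartition s, P.score m f = D ∧ #P.parts < #J.parts := by
  obtain ⟨P, R, hcard, hscore⟩ := exists_uncrossing hf m J Q hq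
  exact ⟨P, le_antisymm (hD.2 ⟨P, rfl⟩) (by linarith [hD.2 ⟨R, rfl⟩]), by omega⟩

lemma exists_score_eq_forall_card_le (hD : IsGreatest (Set.range (score (s := s) m f)) D) :
    ∃ J : Finpartition s, J.score m f = D ∧
      ∀ P : Finpartition s, P.score m f = D → #J.parts ≤ #P.parts := by
  obtain ⟨J₀, hJ₀⟩ := hD.1
  obtain ⟨J, hJ, hmin⟩ := exists_min_image {P : Finpartition s | P.score m f = D}
    (fun P ↦ #P.parts) ⟨J₀, by simpa using hJ₀⟩
  exact ⟨J, by simpa using hJ, fun P hP ↦ hmin P (by simpa using hP)⟩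

/-- Uncrossing a part of `Q` against `J` would produce an optimal partition with fewer parts than
`J`, so every part of `Q` lies inside a part of `J`. -/
lemma le_of_score_eq (hf : IntersectingSupermodular f)
    (hD : IsGreatest (Set.range (score (s := s) m f)) D)
    {J Q : Finpartition s} (hJ : J.score m f = D)
    (hJmin : ∀ P : Finpartition s, P.score m f = D → #J.parts ≤ #P.parts)
    (hQ : Q.score m f = D) : Q ≤ J := by
  intro q hq
  have hT : #(J.meetingParts q) ≤ 1 := by
    by_contra! h
    obtain ⟨P, hP, hlt⟩ := exists_score_eq_card_lt hf hD hJ hQ hq h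
    exact (hJmin P hP).not_gt hlt
  have hqT := J.subset_sup_meetingParts (Q.subset hq)
  obtain ⟨p, hp⟩ : ∃ p, J.meetingParts q = {p} := by
    refine card_eq_one.1 (le_antisymm hT (card_pos.2 ?_))
    obtain ⟨x, hx⟩ := Q.nonempty_of_mem_parts hq
    obtain ⟨p, hp, -⟩ := mem_sup.1 (hqT hx)
    exact ⟨p, hp⟩
  refine ⟨p, (mem_filter.1 (hp ▸ mem_singleton_self p)).1, ?_⟩
  simpa [hp] using hqT

lemma part_subset_of_le {Q J : Finpartition s} (h : Q ≤ J) {q : Finset ι} (hq : q ∈ J.parts)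
    {i : ι} (hi : i ∈ q) : Q.part i ⊆ q := by
  have his : i ∈ s := J.subset hq hi
  obtain ⟨r, hr, hle⟩ := h (Q.part_mem.2 his)
  rwa [J.eq_of_mem_parts hr hq (hle (Q.mem_part_self.2 his)) hi] at hle

lemma exists_mem_parts_pos (hs : s.Nonempty) (hm : 0 ≤ m) {P : Finpartition s}
    (hP : 0 < P.score m f) : ∃ p ∈ P.parts, 0 < f p := by
  by_contra! h
  have hcard : 1 ≤ (#P.parts : ℤ) := by exact_mod_cast card_pos.2 (P.parts_nonempty hs.ne_empty)
  have hsum := sum_nonpos h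
  simp only [score] at hP
  nlinarith

lemma score_sub_score {g : Finset ι → ℤ} {i : ι} (hi : i ∈ s) (hfg : ∀ p, i ∉ p → g p = f p)
    (P : Finpartition s) : P.score m f - P.score m g = f (P.part i) - g (P.part i) := by
  rw [score, score, add_sub_add_left_eq_sub, ← sum_sub_distrib]
  refine sum_eq_single_of_mem _ (P.part_mem.2 hi) fun p hp hne ↦ ?_
  rw [hfg p fun hip ↦ hne (P.part_eq_of_mem hp hip).symm, sub_self]

lemma isGreatest_score_sub_one {g : Finset ι → ℤ} {i : ι} (hi : i ∈ s) {q : Finset ι}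
    (hD : IsGreatest (Set.range (score (s := s) m f)) D)
    (hq : ∀ P : Finpartition s, P.score m f = D → P.part i ⊆ q) (h : DropsAt f g i q) :
    IsGreatest (Set.range (score (s := s) m g)) (D - 1) := by
  obtain ⟨⟨J, hJ⟩, hle⟩ := hD
  have hdiff := score_sub_score (m := m) hi h.eq_of_notMem
  have hpart (P : Finpartition s) : i ∈ P.part i := P.mem_part_self.2 hi
  have hub (P : Finpartition s) : P.score m g ≤ D - 1 := by
    have := hdiff P
    have := h.le_of_mem _ (hpart P)
    rcases (hle ⟨P, rfl⟩).lt_or_eq with hlt | heq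
    · linarith
    · linarith [h.lt_of_subset _ (hpart P) (hq P heq)]
  refine ⟨⟨J, le_antisymm (hub J) ?_⟩, ?_⟩
  · linarith [hdiff J, h.le_add_one_of_mem _ (hpart J)]
  · rintro _ ⟨P, rfl⟩
    exact hub P

end Finpartition

end Uncrossing

section Gid

variable {ℓ n : ℕ}

lemma mem_interSet {A : Fin ℓ → Finset (Fin n)} {p : Finset (Fin ℓ)} {x : Fin n} :
    x ∈ interSet A p ↔ ∀ j ∈ p, x ∈ A j := by
  simp [interSet]

lemma interSet_anti (A : Fin ℓ → Finset (Fin n)) {p q : Finset (Fin ℓ)} (h : p ⊆ q) :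
    interSet A q ⊆ interSet A p :=
  fun _ hx ↦ mem_interSet.2 fun j hj ↦ mem_interSet.1 hx j (h hj)

lemma interSet_union (A : Fin ℓ → Finset (Fin n)) (p q : Finset (Fin ℓ)) :
    interSet A (p ∪ q) = interSet A p ∩ interSet A q := by
  ext x
  simp only [mem_inter, mem_interSet, mem_union, or_imp, forall_and]

lemma card_interSet_add_card_interSet_le (A : Fin ℓ → Finset (Fin n)) (p q : Finset (Fin ℓ)) :
    #(interSet A p) + #(interSet A q) ≤ #(interSet A (p ∪ q)) + #(interSet A (p ∩ q)) := by
  rw [← card_union_add_card_inter, interSet_union, add_comm]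
  gcongr
  exact union_subset (interSet_anti A inter_subset_left) (interSet_anti A inter_subset_right)

lemma interSet_update_erase (A : Fin ℓ → Finset (Fin n)) (i : Fin ℓ) (x : Fin n)
    (p : Finset (Fin ℓ)) :
    interSet (Function.update A i ((A i).erase x)) p
      = if i ∈ p then (interSet A p).erase x else interSet A p := by
  ext y
  split_ifs <;> grind [mem_interSet, Function.update_apply]

lemma partMin_eq_inf' (σ : Fin ℓ → ℕ) {p : Finset (Fin ℓ)} (hp : p.Nonempty) :
    partMin σ p = p.inf' hp σ :=
  (inf'_eq_csInf_image p hp σ).symm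

lemma partMin_le (σ : Fin ℓ → ℕ) {p : Finset (Fin ℓ)} {j : Fin ℓ} (hj : j ∈ p) :
    partMin σ p ≤ σ j := by
  rw [partMin_eq_inf' σ ⟨j, hj⟩]
  exact inf'_le σ hj

lemma exists_mem_eq_partMin (σ : Fin ℓ → ℕ) {p : Finset (Fin ℓ)} (hp : p.Nonempty) :
    ∃ j ∈ p, σ j = partMin σ p := by
  obtain ⟨j, hj, h⟩ := exists_mem_eq_inf' hp σ
  exact ⟨j, hj, by rw [partMin_eq_inf' σ hp, h]⟩

lemma partMin_anti (σ : Fin ℓ → ℕ) {p q : Finset (Fin ℓ)} (h : p ⊆ q) (hp : p.Nonempty) :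
    partMin σ q ≤ partMin σ p := by
  rw [partMin_eq_inf' σ hp, partMin_eq_inf' σ (hp.mono h)]
  exact inf'_mono σ h hp

lemma partMin_le_partMin_add {σ τ : Fin ℓ → ℕ} {c : ℕ} {p : Finset (Fin ℓ)} (hp : p.Nonempty)
    (h : ∀ j ∈ p, σ j ≤ τ j + c) : partMin σ p ≤ partMin τ p + c := by
  obtain ⟨j, hj, hτj⟩ := exists_mem_eq_partMin τ hp
  exact (partMin_le σ hj).trans (hτj ▸ h j hj)

lemma partMin_update_of_notMem (σ : Fin ℓ → ℕ) {i : Fin ℓ} (c : ℕ) {p : Finset (Fin ℓ)}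
    (hi : i ∉ p) : partMin (Function.update σ i c) p = partMin σ p := by
  refine congrArg sInf (Set.image_congr fun j hj ↦ ?_)
  exact Function.update_of_ne (ne_of_mem_of_not_mem hj hi) c σ

lemma partMin_add_partMin_le (σ : Fin ℓ → ℕ) {p q : Finset (Fin ℓ)} (h : (p ∩ q).Nonempty) :
    partMin σ p + partMin σ q ≤ partMin σ (p ∪ q) + partMin σ (p ∩ q) := by
  have hp : p.Nonempty := h.mono inter_subset_left
  have hq : q.Nonempty := h.mono inter_subset_right
  have hunion : partMin σ (p ∪ q) = min (partMin σ p) (partMin σ q) := by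
    rw [partMin_eq_inf' σ hp, partMin_eq_inf' σ hq, partMin_eq_inf' σ (hp.mono subset_union_left),
      ← inf'_union hp hq]
  have hp' := partMin_anti σ inter_subset_left h
  have hq' := partMin_anti σ inter_subset_right h
  omega

def gidTerm (σ : Fin ℓ → ℕ) (A : Fin ℓ → Finset (Fin n)) (p : Finset (Fin ℓ)) : ℤ :=
  partMin σ p + #(interSet A p)

lemma intersectingSupermodular_gidTerm (σ : Fin ℓ → ℕ) (A : Fin ℓ → Finset (Fin n)) :
    IntersectingSupermodular (gidTerm σ A) := fun p q h ↦ by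
  have hσ := partMin_add_partMin_le σ h
  have hA := card_interSet_add_card_interSet_le A p q
  simp only [gidTerm]
  omega

lemma gid_eq_iff (m : ℕ) (σ : Fin ℓ → ℕ) (A : Fin ℓ → Finset (Fin n)) (D : ℤ) :
    gid m σ A = D ↔
      IsGreatest (Set.range (Finpartition.score (s := univ) m (gidTerm σ A))) D := by
  have hgid : gid m σ A = sSup (Set.range (Finpartition.score (s := univ) m (gidTerm σ A))) := by
    unfold gid
    congr 1
    ext v
    exact exists_congr fun P ↦ eq_comm
  have hfin := Set.finite_range (Finpartition.score (s := univ) m (gidTerm σ A))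
  rw [hgid]
  refine ⟨?_, IsGreatest.csSup_eq⟩
  rintro rfl
  exact ⟨(Set.range_nonempty _).csSup_mem hfin, fun _ hv ↦ le_csSup hfin.bddAbove hv⟩

def IsMinimalContraction (σ σ' : Fin ℓ → ℕ) (A A' : Fin ℓ → Finset (Fin n)) : Prop :=
  (∀ i, σ' i ≤ σ i) ∧ (∀ i, A' i ⊆ A i) ∧
    ∑ i, ((σ i - σ' i) + ((A i).card - (A' i).card)) = 1

lemma isMinimalContraction_update_erase (σ : Fin ℓ → ℕ) {A : Fin ℓ → Finset (Fin n)}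
    {i : Fin ℓ} {x : Fin n} (hx : x ∈ A i) :
    IsMinimalContraction σ σ A (Function.update A i ((A i).erase x)) := by
  refine ⟨fun _ ↦ le_rfl, fun j ↦ ?_, ?_⟩
  · rcases eq_or_ne j i with rfl | hj
    · simpa using erase_subset x (A j)
    · simp [Function.update_of_ne hj]
  · rw [sum_eq_single_of_mem i (mem_univ i) fun j _ hj ↦ by simp [Function.update_of_ne hj],
      Function.update_self, card_erase_of_mem hx]
    have := card_pos.2 ⟨x, hx⟩
    omega

lemma isMinimalContraction_update_sub_one {σ : Fin ℓ → ℕ} (A : Fin ℓ → Finset (Fin n))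
    {i : Fin ℓ} (hi : σ i ≠ 0) : IsMinimalContraction σ (Function.update σ i (σ i - 1)) A A := by
  refine ⟨fun j ↦ ?_, fun _ ↦ subset_rfl, ?_⟩
  · rcases eq_or_ne j i with rfl | hj
    · simp
    · simp [Function.update_of_ne hj]
  · rw [sum_eq_single_of_mem i (mem_univ i) fun j _ hj ↦ by simp [Function.update_of_ne hj],
      Function.update_self]
    omega

lemma dropsAt_update_erase (σ : Fin ℓ → ℕ) {A : Fin ℓ → Finset (Fin n)} (i : Fin ℓ)
    {q : Finset (Fin ℓ)} {x : Fin n} (hx : x ∈ interSet A q) :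
    DropsAt (gidTerm σ A) (gidTerm σ (Function.update A i ((A i).erase x))) i q where
  eq_of_notMem p hi := by simp [gidTerm, interSet_update_erase, hi]
  le_of_mem p hi := by
    simpa [gidTerm, interSet_update_erase, hi] using card_erase_le (s := interSet A p) (a := x)
  le_add_one_of_mem p hi := by
    have := pred_card_le_card_erase (s := interSet A p) (a := x)
    simp only [gidTerm, interSet_update_erase, hi, if_true]
    omega
  lt_of_subset p hi hpq := by
    have hxp := interSet_anti A hpq hx
    have := card_pos.2 ⟨x, hxp⟩
    simp only [gidTerm, interSet_update_erase, hi, if_true, card_erase_of_mem hxp]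
    omega

lemma dropsAt_update_sub_one {σ : Fin ℓ → ℕ} (A : Fin ℓ → Finset (Fin n)) {i : Fin ℓ}
    {q : Finset (Fin ℓ)} (hiq : σ i = partMin σ q) (hi : σ i ≠ 0) :
    DropsAt (gidTerm σ A) (gidTerm (Function.update σ i (σ i - 1)) A) i q := by
  set σ' := Function.update σ i (σ i - 1)
  have hσ' (j : Fin ℓ) : σ' j ≤ σ j ∧ σ j ≤ σ' j + 1 := by
    rcases eq_or_ne j i with rfl | hj
    · simp only [σ', Function.update_self]
      omega
    · simp [σ', Function.update_of_ne hj]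
  refine ⟨fun p hip ↦ ?_, fun p hip ↦ ?_, fun p hip ↦ ?_, fun p hip hpq ↦ ?_⟩ <;>
    simp only [gidTerm, add_le_add_iff_right, add_lt_add_iff_right, Nat.cast_le, Nat.cast_lt]
  · rw [partMin_update_of_notMem σ _ hip]
  · exact partMin_le_partMin_add (c := 0) ⟨i, hip⟩ fun j _ ↦ (hσ' j).1
  · have := partMin_le_partMin_add (c := 1) ⟨i, hip⟩ fun j _ ↦ (hσ' j).2
    omega
  · have h₁ := partMin_le σ' hip
    have h₂ := partMin_anti σ hpq ⟨i, hip⟩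
    rw [show σ' i = σ i - 1 from Function.update_self ..] at h₁
    omega

lemma exists_isMinimalContraction_dropsAt {σ : Fin ℓ → ℕ} {A : Fin ℓ → Finset (Fin n)}
    {q : Finset (Fin ℓ)} (hq : q.Nonempty) (h : 0 < gidTerm σ A q) :
    ∃ i ∈ q, ∃ σ' A', IsMinimalContraction σ σ' A A' ∧
      DropsAt (gidTerm σ A) (gidTerm σ' A') i q := by
  rcases (interSet A q).eq_empty_or_nonempty with hA | ⟨x, hx⟩
  · obtain ⟨i, hi, hiq⟩ := exists_mem_eq_partMin σ hq
    have hσi : σ i ≠ 0 := by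
      simp only [gidTerm, hA, card_empty] at h
      omega
    exact ⟨i, hi, _, A, isMinimalContraction_update_sub_one A hσi,
      dropsAt_update_sub_one A hiq hσi⟩
  · obtain ⟨i, hi⟩ := hq
    exact ⟨i, hi, σ, _, isMinimalContraction_update_erase σ (mem_interSet.1 hx i hi),
      dropsAt_update_erase σ i hx⟩

end Gid

theorem exists_minimal_contraction_general
    (ℓ k n : ℕ) (hℓ : 1 ≤ ℓ)
    (σ : Fin ℓ → ℕ) (A : Fin ℓ → Finset (Fin n))
    (d : ℕ) (hd : 1 ≤ d) (hgid : gid k σ A = (d : ℤ)) :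
    ∃ (σ' : Fin ℓ → ℕ) (A' : Fin ℓ → Finset (Fin n)),
      (∀ i, σ' i ≤ σ i) ∧ (∀ i, A' i ⊆ A i) ∧
      (∑ i, ((σ i - σ' i) + ((A i).card - (A' i).card))) = 1 ∧
      gid k σ' A' = (d : ℤ) - 1 := by
  rw [gid_eq_iff] at hgid
  obtain ⟨J, hJ, hJmin⟩ := Finpartition.exists_score_eq_forall_card_le hgid
  obtain ⟨q, hqJ, hq⟩ := Finpartition.exists_mem_parts_pos (univ_nonempty_iff.2 ⟨⟨0, hℓ⟩⟩)
    (Int.natCast_nonneg k) (hJ ▸ by omega : 0 < J.score k (gidTerm σ A))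
  obtain ⟨i, hi, σ', A', ⟨hσ', hA', hsum⟩, hdrop⟩ :=
    exists_isMinimalContraction_dropsAt (J.nonempty_of_mem_parts hqJ) hq
  have hrefine (P : Finpartition univ) (hP : P.score k (gidTerm σ A) = d) : P ≤ J :=
    Finpartition.le_of_score_eq (intersectingSupermodular_gidTerm σ A) hgid hJ hJmin hP
  refine ⟨σ', A', hσ', hA', hsum, (gid_eq_iff ..).2 ?_⟩
  exact Finpartition.isGreatest_score_sub_one (mem_univ i) hgid
    (fun P hP ↦ Finpartition.part_subset_of_le (hrefine P hP) hqJ hi) hdrop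

/-- Minimal contractions decrease `gid` by exactly one: if a proper configuration has
`gid_k = d ≥ 1`, there is a minimal contraction with `gid_k = d - 1`. -/
theorem exists_minimal_contraction
    (ℓ k n b : ℕ) (hℓ : 1 ≤ ℓ) (hk : 1 ≤ k) (hn : 1 ≤ n) (hb : 1 ≤ b) (hbk : b ≤ k)
    (σ : Fin ℓ → ℕ) (A : Fin ℓ → Finset (Fin n))
    (hσ : ∀ i, σ i ≤ b) (hproper : ∀ i, σ i + (A i).card ≤ k)
    (d : ℕ) (hd : 1 ≤ d) (hgid : gid k σ A = (d : ℤ)) :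
    ∃ (σ' : Fin ℓ → ℕ) (A' : Fin ℓ → Finset (Fin n)),
      (∀ i, σ' i ≤ σ i) ∧ (∀ i, A' i ⊆ A i) ∧
      (∑ i, ((σ i - σ' i) + ((A i).card - (A' i).card))) = 1 ∧
      gid k σ' A' = (d : ℤ) - 1 :=
  exists_minimal_contraction_general ℓ k n hℓ σ A d hd hgid
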